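/- If the unilateral backward weighted shift B on ℓ²(ℕ) with positive weights (wₙ) satisfies the M-hypercyclicity criterion with respect to a sequence (n_k) (with Bⁿᵏ(M) ⊆ M), then B is M-hypercyclic: there exists x ∈ ℓ²(ℕ) with {Bⁿx : n ≥ 0} ∩ M dense in M. -/
import Mathlib

open Filter Finset Topology

noncomputable section

/-- The `M`-hypercyclicity criterion for `T` with respect to the sequence `nk`. -/
def HCCriterion {H : Type*} [NormedAddCommGroup H] [NormedSpace ℂ H]
    (T : H →L[ℂ] H) (M : Set H) (nk : ℕ → ℕ) : Prop :=
  ∃ D₁ D₂ : Set H, ∃ S : ℕ → H → H,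
    D₁ ⊆ M ∧ D₂ ⊆ M ∧ M ⊆ closure D₁ ∧ M ⊆ closure D₂ ∧
    (∀ k, ∀ y ∈ D₂, S k y ∈ M) ∧
    (∀ x ∈ D₁, Filter.Tendsto (fun k => (T ^ nk k) x) Filter.atTop (nhds 0)) ∧
    (∀ y ∈ D₂, Filter.Tendsto (fun k => S k y) Filter.atTop (nhds 0)) ∧
    (∀ y ∈ D₂, Filter.Tendsto (fun k => (T ^ nk k) (S k y)) Filter.atTop (nhds y)) ∧
    (∀ k, (⇑(T ^ nk k)) '' M ⊆ M)

/-- `T` is `M`-hypercyclic: some orbit meets `M` in a dense subset of `M`. -/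
def SubspaceHypercyclic {H : Type*} [NormedAddCommGroup H] [NormedSpace ℂ H]
    (T : H →L[ℂ] H) (M : Set H) : Prop :=
  ∃ x : H, M ⊆ closure ((Set.range fun n : ℕ => (T ^ n) x) ∩ M)

/-- The Hilbert space `ℓ²(ℕ)`. -/
abbrev HN : Type := lp (fun _ : ℕ => ℂ) 2

/-- The standard orthonormal basis vectors of `ℓ²(ℕ)`. -/
def e (n : ℕ) : HN := lp.single 2 n (1 : ℂ)

set_option maxHeartbeats 1000000 in
theorem criterion_implies_subspace_hypercyclic
    (w : ℕ → ℝ) (hw_pos : ∀ n, 0 < w n) (hw_bdd : ∃ C : ℝ, ∀ n, w n ≤ C)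
    (B : HN →L[ℂ] HN)
    (hB0 : B (e 0) = 0) (hB : ∀ n : ℕ, B (e (n + 1)) = (w (n + 1) : ℂ) • e n)
    (M : Set HN) (hMcl : IsClosed M)
    (hMsub : ∃ N : Submodule ℂ HN, (N : Set HN) = M)
    (nk : ℕ → ℕ) (hnk_mono : StrictMono nk)
    (hcrit : HCCriterion B M nk) :
    SubspaceHypercyclic B M := by
  classical
  obtain ⟨N, hN⟩ := hMsub
  obtain ⟨D₁, D₂, S, hD₁M, hD₂M, hD₁d, hD₂d, hSM, h1, h2, h3, hinv⟩ := hcrit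
  -- `HN` is separable
  haveI hsep : TopologicalSpace.SeparableSpace HN := by
    have b : HilbertBasis ℕ ℂ HN := default
    have hd := b.dense_span
    have hs : TopologicalSpace.IsSeparable (Set.univ : Set HN) := by
      have hsr : TopologicalSpace.IsSeparable (Set.range b) :=
        (Set.countable_range b).isSeparable
      have h2' := (hsr.span (R := ℂ)).closure
      rw [← Submodule.topologicalClosure_coe, hd] at h2'
      simpa using h2'
    exact TopologicalSpace.isSeparable_univ_iff.1 hs
  haveI : SecondCountableTopology HN := UniformSpace.secondCountable_of_separable HN
  haveI : CompleteSpace M := hMcl.completeSpace_coe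
  haveI : Nonempty M := ⟨⟨0, hN ▸ N.zero_mem⟩⟩
  obtain ⟨t, htc, htd⟩ := TopologicalSpace.exists_countable_dense M
  haveI : Countable t := htc.to_subtype
  -- the open sets
  set U : M → ℕ → Set M := fun y m =>
    ⋃ k, {x : M | ‖(B ^ nk k) (x : HN) - (y : HN)‖ < 1 / (m + 1)} with hU
  have hUopen : ∀ y m, IsOpen (U y m) := by
    intro y m
    refine isOpen_iUnion fun k => ?_
    have hc : Continuous fun x : M => ‖(B ^ nk k) (x : HN) - (y : HN)‖ :=
      (((B ^ nk k).continuous.comp continuous_subtype_val).sub continuous_const).norm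
    exact isOpen_lt hc continuous_const
  have hUdense : ∀ y m, Dense (U y m) := by
    intro y m
    rw [Metric.dense_iff]
    intro z r hr
    set δ : ℝ := 1 / (2 * (m + 1)) with hδ
    have hδpos : 0 < δ := by positivity
    obtain ⟨x', hx'D, hx'⟩ := Metric.mem_closure_iff.1 (hD₁d z.2) (r / 2) (by positivity)
    obtain ⟨y', hy'D, hy'⟩ := Metric.mem_closure_iff.1 (hD₂d y.2) δ hδpos
    have e1 : ∀ᶠ k in atTop, ‖(B ^ nk k) x'‖ < δ / 2 := by
      have := Metric.tendsto_nhds.1 (h1 x' hx'D) (δ / 2) (by positivity)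
      simpa [dist_zero_right] using this
    have e2 : ∀ᶠ k in atTop, ‖S k y'‖ < r / 2 := by
      have := Metric.tendsto_nhds.1 (h2 y' hy'D) (r / 2) (by positivity)
      simpa [dist_zero_right] using this
    have e3 : ∀ᶠ k in atTop, ‖(B ^ nk k) (S k y') - y'‖ < δ / 2 := by
      have := Metric.tendsto_nhds.1 (h3 y' hy'D) (δ / 2) (by positivity)
      simpa [dist_eq_norm] using this
    obtain ⟨k, hk1, hk2, hk3⟩ := (e1.and (e2.and e3)).exists
    have hpM : x' + S k y' ∈ M := by
      rw [← hN] at *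
      exact N.add_mem (hD₁M hx'D) (hSM k y' hy'D)
    refine ⟨⟨x' + S k y', hpM⟩, ?_, ?_⟩
    · rw [Metric.mem_ball, Subtype.dist_eq, dist_eq_norm]
      calc ‖(x' + S k y') - (z : HN)‖ = ‖(x' - z) + S k y'‖ := by congr 1; abel
        _ ≤ ‖x' - (z : HN)‖ + ‖S k y'‖ := norm_add_le _ _
        _ < r / 2 + r / 2 := by
            refine add_lt_add ?_ hk2
            rw [dist_comm, dist_eq_norm] at hx'
            exact hx'
        _ = r := by ring
    · refine Set.mem_iUnion.2 ⟨k, ?_⟩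
      simp only [Set.mem_setOf_eq]
      have hmap : (B ^ nk k) ((x' : HN) + S k y') =
          (B ^ nk k) x' + (B ^ nk k) (S k y') := map_add _ _ _
      calc ‖(B ^ nk k) ((x' : HN) + S k y') - (y : HN)‖
          = ‖(B ^ nk k) x' + (((B ^ nk k) (S k y') - y') + (y' - (y : HN)))‖ := by
            rw [hmap]; congr 1; abel
        _ ≤ ‖(B ^ nk k) x'‖ + (‖(B ^ nk k) (S k y') - y'‖ + ‖y' - (y : HN)‖) := by
            refine (norm_add_le _ _).trans ?_
            gcongr
            exact norm_add_le _ _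
        _ < δ / 2 + (δ / 2 + δ) := by
            have : ‖y' - (y : HN)‖ < δ := by
              rw [dist_eq_norm] at hy'
              rw [← norm_neg]; simpa [neg_sub] using hy'
            exact add_lt_add hk1 (add_lt_add hk3 this)
        _ = 2 * δ := by ring
        _ = 1 / (m + 1) := by rw [hδ]; field_simp
  -- Baire category
  have hdense : Dense (⋂ p : t × ℕ, U p.1 p.2) :=
    dense_iInter_of_isOpen (fun p => hUopen p.1 p.2) (fun p => hUdense p.1 p.2)
  obtain ⟨x, hx⟩ := hdense.nonempty
  refine ⟨(x : HN), fun z hz => ?_⟩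
  rw [Metric.mem_closure_iff]
  intro ε hε
  obtain ⟨y, hyb, hyt⟩ := Metric.dense_iff.1 htd ⟨z, hz⟩ (ε / 2) (by positivity)
  obtain ⟨m, hm⟩ := exists_nat_one_div_lt (show (0:ℝ) < ε / 2 by positivity)
  have hxU : x ∈ U y m := Set.mem_iInter.1 hx (⟨⟨y, hyt⟩, m⟩ : t × ℕ)
  obtain ⟨_, ⟨k, rfl⟩, hk⟩ := hxU
  refine ⟨(B ^ nk k) (x : HN), ⟨⟨nk k, rfl⟩, hinv k ⟨(x : HN), x.2, rfl⟩⟩, ?_⟩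
  have hd1 : dist z (y : HN) < ε / 2 := by
    rw [Metric.mem_ball, Subtype.dist_eq] at hyb
    rw [dist_comm]; exact hyb
  have hd2 : dist ((y : HN)) ((B ^ nk k) (x : HN)) < ε / 2 := by
    rw [dist_comm, dist_eq_norm]
    exact lt_trans hk hm
  calc dist z ((B ^ nk k) (x : HN)) ≤ dist z (y : HN) + dist ((y : HN)) _ := dist_triangle _ _ _
    _ < ε / 2 + ε / 2 := add_lt_add hd1 hd2
    _ = ε := by ring
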